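/- arXiv:1303.3789 — 4 statements merged into one kernel-verified Lean document; each statement's English description precedes it below -/
import Mathlib

section
/- Let S be a numerical semigroup with multiplicity e = m(S). Then l_e(S) = 0 if and only if ord_S(s+e) = ord_S(s)+1 for all s∈S (equivalently, by García's criterion, if and only if the tangent cone G(S) of k[[S]] is Cohen–Macaulay). -/
open scoped Pointwise

/-- `S ⊆ ℕ` is a numerical semigroup: it contains `0`, is closed under
addition, and has finite complement in `ℕ`. -/
def IsNumSgp (S : Set ℕ) : Prop :=
  (0 : ℕ) ∈ S ∧ (∀ a ∈ S, ∀ b ∈ S, a + b ∈ S) ∧ {x : ℕ | x ∉ S}.Finite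

/-- `nM S t` is the `t`-fold sumset of the maximal ideal `M = S \ {0}`,
with the convention `nM S 0 = S`. -/
def nM (S : Set ℕ) : ℕ → Set ℕ
  | 0 => S
  | t + 1 => (S \ {0}) + nM S t

/-- the order of `s` with respect to `S` : the largest `t` with `s ∈ tM`. -/
noncomputable def ordS (S : Set ℕ) (s : ℕ) : ℕ := sSup {t : ℕ | s ∈ nM S t}

/-- the multiplicity of `S` : its least nonzero element. -/
noncomputable def mult (S : Set ℕ) : ℕ := sInf {x : ℕ | x ∈ S ∧ x ≠ 0}

/-- the Apéry set of `S` with respect to `x` : elements `s ∈ S` with `s - x ∉ S`. -/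
def Ap (S : Set ℕ) (x : ℕ) : Set ℕ := {s : ℕ | s ∈ S ∧ ¬ ∃ t ∈ S, s = t + x}

/-- membership of an integer in (the image in `ℤ` of) `S`. -/
def zmem (S : Set ℕ) (z : ℤ) : Prop := ∃ t ∈ S, (t : ℤ) = z

/-- the Frobenius number of `S` : the largest integer not in `S`. -/
noncomputable def Frob (S : Set ℕ) : ℤ := sSup {z : ℤ | ¬ zmem S z}

/-- `S` is symmetric: for every integer `z`, `z ∈ S` iff `F(S) - z ∉ S`. -/
def IsSymmetric (S : Set ℕ) : Prop := ∀ z : ℤ, zmem S z ↔ ¬ zmem S (Frob S - z)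

/-- the set of maximal elements of `Ap S x` with respect to the order
`u ⪯ v` iff `v = u + z` for some `z ∈ S`. -/
def MaxAp (S : Set ℕ) (x : ℕ) : Set ℕ :=
  {w : ℕ | w ∈ Ap S x ∧ ∀ y ∈ Ap S x, (∃ z ∈ S, y = w + z) → y = w}

/-- the set of maximal elements of `Ap S x` with respect to the order
`u ⪯_M v` iff `v = u + z` for some `z ∈ S` with `ord(v) = ord(u) + ord(z)`. -/
def MaxMAp (S : Set ℕ) (x : ℕ) : Set ℕ :=
  {w : ℕ | w ∈ Ap S x ∧ ∀ y ∈ Ap S x,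
    (∃ z ∈ S, y = w + z ∧ ordS S y = ordS S w + ordS S z) → y = w}

/-- `S` is M-pure with respect to `x` : all maximal elements of `Ap S x`
under `⪯_M` have the same order. -/
def MPureWrt (S : Set ℕ) (x : ℕ) : Prop :=
  ∀ w ∈ MaxMAp S x, ∀ w' ∈ MaxMAp S x, ordS S w = ordS S w'

/-- `S` is M-pure : it is M-pure with respect to its multiplicity. -/
def MPure (S : Set ℕ) : Prop := MPureWrt S (mult S)

/-- `β_i(x)` : the number of elements of `Ap S x` of order `i`. -/
noncomputable def betaS (S : Set ℕ) (x i : ℕ) : ℕ := {w ∈ Ap S x | ordS S w = i}.ncard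

/-- `d(x)` : the maximal order of an element of `Ap S x`. -/
noncomputable def dS (S : Set ℕ) (x : ℕ) : ℕ := sSup (ordS S '' Ap S x)

/-- the reduction number of `S` : the least `r` with `(r+1)M = m(S) + rM`. -/
noncomputable def redNum (S : Set ℕ) : ℕ :=
  sInf {r : ℕ | nM S (r + 1) = (fun y => mult S + y) '' nM S r}

/-- `l_x(S) = max { ord(s+x) - ord(x) - ord(s) : s ∈ S, ord(s) ≤ r }`. -/
noncomputable def lS (S : Set ℕ) (x : ℕ) : ℕ :=
  sSup {t : ℕ | ∃ s ∈ S, ordS S s ≤ redNum S ∧ t = ordS S (s + x) - ordS S x - ordS S s}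

/-- the Hilbert function of `S`. -/
noncomputable def HilbS (S : Set ℕ) (t : ℕ) : ℕ := (nM S t \ nM S (t + 1)).ncard

/-- The data of a gluing `S = ⟨q m₁, …, q m_d, p n₁, …, p n_k⟩` of two numerical
semigroups `S₁ = ⟨m₁, …, m_d⟩` and `S₂ = ⟨n₁, …, n_k⟩`, minimally generated by
`m₁ < ⋯ < m_d` and `n₁ < ⋯ < n_k`, where `p ∈ S₁ \ {m₁, …, m_d}`,
`q ∈ S₂ \ {n₁, …, n_k}` and `gcd(p, q) = 1`. -/
structure Gluing where
  d : ℕ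
  k : ℕ
  hd : 0 < d
  hk : 0 < k
  m : Fin d → ℕ
  n : Fin k → ℕ
  p : ℕ
  q : ℕ
  hm : StrictMono m
  hn : StrictMono n
  hmin₁ : ∀ i, m i ∉ AddSubmonoid.closure (Set.range m \ {m i})
  hmin₂ : ∀ j, n j ∉ AddSubmonoid.closure (Set.range n \ {n j})
  hnum₁ : IsNumSgp (AddSubmonoid.closure (Set.range m) : Set ℕ)
  hnum₂ : IsNumSgp (AddSubmonoid.closure (Set.range n) : Set ℕ)
  hp : p ∈ AddSubmonoid.closure (Set.range m)
  hq : q ∈ AddSubmonoid.closure (Set.range n)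
  hpm : p ∉ Set.range m
  hqn : q ∉ Set.range n
  hpq : Nat.gcd p q = 1

/-- the numerical semigroup `S₁ = ⟨m₁, …, m_d⟩`. -/
def Gluing.S₁ (G : Gluing) : Set ℕ := (AddSubmonoid.closure (Set.range G.m) : Set ℕ)

/-- the numerical semigroup `S₂ = ⟨n₁, …, n_k⟩`. -/
def Gluing.S₂ (G : Gluing) : Set ℕ := (AddSubmonoid.closure (Set.range G.n) : Set ℕ)

/-- the glued numerical semigroup `S = ⟨q m₁, …, q m_d, p n₁, …, p n_k⟩`. -/
def Gluing.S (G : Gluing) : Set ℕ :=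
  (AddSubmonoid.closure
    ((fun x => G.q * x) '' Set.range G.m ∪ (fun x => G.p * x) '' Set.range G.n) : Set ℕ)

/-- the smallest generator `m₁` of `S₁`. -/
def Gluing.m₁ (G : Gluing) : ℕ := G.m ⟨0, G.hd⟩

/-- the smallest generator `n₁` of `S₂`. -/
def Gluing.n₁ (G : Gluing) : ℕ := G.n ⟨0, G.hk⟩

/-- the gluing is specific if `ord_{S₂}(q) + l_q(S₂) ≤ ord_{S₁}(p)`. -/
def Gluing.Specific (G : Gluing) : Prop := ordS G.S₂ G.q + lS G.S₂ G.q ≤ ordS G.S₁ G.p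

/-- the gluing is nice if `q = a n₁` for some `1 < a ≤ ord_{S₁}(p)`. -/
def Gluing.Nice (G : Gluing) : Prop := ∃ a : ℕ, 1 < a ∧ a ≤ ordS G.S₁ G.p ∧ G.q = a * G.n₁

section Aux

variable {S : Set ℕ}

lemma nM_succ (S : Set ℕ) (t : ℕ) : nM S (t + 1) = (S \ {0}) + nM S t := rfl

lemma mult_spec (hS : IsNumSgp S) : mult S ∈ S ∧ mult S ≠ 0 := by
  classical
  have hne : {x : ℕ | x ∈ S ∧ x ≠ 0}.Nonempty := by
    refine ⟨hS.2.2.toFinset.sup id + 1, ?_, by omega⟩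
    by_contra h
    have h1 : hS.2.2.toFinset.sup id + 1 ∈ hS.2.2.toFinset := by
      simpa using h
    have := Finset.le_sup (f := id) h1
    simp only [id] at this
    omega
  exact Nat.sInf_mem hne

lemma mult_le' (hS : IsNumSgp S) {a : ℕ} (ha : a ∈ S) (h0 : a ≠ 0) : mult S ≤ a :=
  Nat.sInf_le ⟨ha, h0⟩

lemma nM_lower (hS : IsNumSgp S) : ∀ t, ∀ x ∈ nM S t, t ≤ x := by
  intro t
  induction t with
  | zero => intro x _; omega
  | succ t ih =>
    intro x hx
    rw [nM_succ, Set.mem_add] at hx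
    obtain ⟨a, ha, y, hy, rfl⟩ := hx
    have h1 : a ≠ 0 := by simpa using ha.2
    have := ih y hy
    omega

lemma nM_ge_mult (hS : IsNumSgp S) {t : ℕ} (ht : 1 ≤ t) {x : ℕ} (hx : x ∈ nM S t) :
    mult S ≤ x := by
  obtain ⟨t', rfl⟩ : ∃ t', t = t' + 1 := ⟨t - 1, by omega⟩
  rw [nM_succ, Set.mem_add] at hx
  obtain ⟨a, ha, y, hy, rfl⟩ := hx
  have := mult_le' hS ha.1 (by simpa using ha.2)
  omega

lemma ordSet_bdd (hS : IsNumSgp S) (s : ℕ) : BddAbove {t | s ∈ nM S t} :=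
  ⟨s, fun t ht => nM_lower hS t s ht⟩

lemma mem_nM_ordS (hS : IsNumSgp S) {s : ℕ} (hs : s ∈ S) : s ∈ nM S (ordS S s) := by
  have h := Nat.sSup_mem (s := {t | s ∈ nM S t}) ⟨0, hs⟩ (ordSet_bdd hS s)
  exact h

lemma le_ordS (hS : IsNumSgp S) {s t : ℕ} (h : s ∈ nM S t) : t ≤ ordS S s :=
  le_csSup (ordSet_bdd hS s) h

lemma ordS_zero (hS : IsNumSgp S) : ordS S 0 = 0 := by
  have h : {t | (0 : ℕ) ∈ nM S t} = {0} := by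
    ext t
    simp only [Set.mem_setOf_eq, Set.mem_singleton_iff]
    constructor
    · intro h; have := nM_lower hS t 0 h; omega
    · rintro rfl; exact hS.1
  rw [ordS, h, csSup_singleton]

lemma mult_mem_nM1 (hS : IsNumSgp S) : mult S ∈ nM S 1 := by
  rw [nM_succ, Set.mem_add]
  exact ⟨mult S, ⟨(mult_spec hS).1, by simp [(mult_spec hS).2]⟩, 0, hS.1, by omega⟩

lemma ordS_mult (hS : IsNumSgp S) : ordS S (mult S) = 1 := by
  have h1 : 1 ≤ ordS S (mult S) := le_ordS hS (mult_mem_nM1 hS)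
  have h2 : ordS S (mult S) ≤ 1 := by
    rw [ordS]
    have hne : Set.Nonempty {t | mult S ∈ nM S t} := ⟨0, (mult_spec hS).1⟩
    apply csSup_le hne
    intro t ht
    by_contra h
    push_neg at h
    obtain ⟨t', rfl⟩ : ∃ t', t = t' + 1 := ⟨t - 1, by omega⟩
    have ht' : mult S ∈ (S \ {0}) + nM S t' := ht
    rw [Set.mem_add] at ht'
    replace ht := ht'
    obtain ⟨a, ha, y, hy, hxy⟩ := ht
    have ha' := mult_le' hS ha.1 (by simpa using ha.2)
    have hy' : mult S ≤ y := nM_ge_mult hS (t := t') (by omega) hy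
    have := (mult_spec hS).2
    omega
  omega

lemma ordS_add_mult_ge (hS : IsNumSgp S) {s : ℕ} (hs : s ∈ S) :
    ordS S s + 1 ≤ ordS S (s + mult S) := by
  apply le_ordS hS
  rw [nM_succ, Set.mem_add]
  exact ⟨mult S, ⟨(mult_spec hS).1, by simp [(mult_spec hS).2]⟩, s, mem_nM_ordS hS hs,
    by omega⟩

lemma exists_conductor (hS : IsNumSgp S) : ∃ c : ℕ, 0 < c ∧ ∀ n, c ≤ n → n ∈ S := by
  classical
  refine ⟨hS.2.2.toFinset.sup id + 1, by omega, fun n hn => ?_⟩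
  by_contra h
  have h1 : n ∈ hS.2.2.toFinset := by simpa using h
  have := Finset.le_sup (f := id) h1
  simp only [id] at this
  omega

lemma conductor_nM (hS : IsNumSgp S) {c : ℕ} (hc : ∀ n, c ≤ n → n ∈ S) :
    ∀ t n, t * mult S + c ≤ n → n ∈ nM S t := by
  intro t
  induction t with
  | zero =>
    intro n hn
    exact hc n (by simpa using hn)
  | succ t ih =>
    intro n hn
    rw [nM_succ, Set.mem_add]
    have he : mult S ≠ 0 := (mult_spec hS).2
    have harith : (t + 1) * mult S = t * mult S + mult S := by ring
    refine ⟨mult S, ⟨(mult_spec hS).1, by simp [he]⟩, n - mult S, ih _ (by omega), by omega⟩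

lemma descend (hS : IsNumSgp S) :
    ∀ t, ∀ n ∈ nM S (t + 1), n ≤ (t + 1) * mult S + t → n - mult S ∈ nM S t := by
  intro t
  induction t with
  | zero =>
    intro n hn hle
    rw [nM_succ, Set.mem_add] at hn
    obtain ⟨a, ha, y, hy, hxy⟩ := hn
    have ha' := mult_le' hS ha.1 (by simpa using ha.2)
    have h1 : (1 : ℕ) * mult S = mult S := by ring
    have h2 : n - mult S = 0 := by omega
    rw [h2]; exact hS.1
  | succ t ih =>
    intro n hn hle
    rw [nM_succ, Set.mem_add] at hn
    obtain ⟨a, ha, y, hy, hxy⟩ := hn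
    have ha' := mult_le' hS ha.1 (by simpa using ha.2)
    by_cases hae : a = mult S
    · have h1 : n - mult S = y := by omega
      rw [h1]; exact hy
    · have hye : mult S ≤ y := nM_ge_mult hS (by omega) hy
      have harith : (t + 1 + 1) * mult S = (t + 1) * mult S + mult S := by ring
      have hyle : y ≤ (t + 1) * mult S + t := by omega
      have h1 := ih y hy hyle
      rw [nM_succ, Set.mem_add]
      exact ⟨a, ha, y - mult S, h1, by omega⟩

lemma redSet_nonempty (hS : IsNumSgp S) :
    {r : ℕ | nM S (r + 1) = (fun y => mult S + y) '' nM S r}.Nonempty := by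
  obtain ⟨c, hc0, hc⟩ := exists_conductor hS
  refine ⟨c, ?_⟩
  have he : mult S ≠ 0 := (mult_spec hS).2
  ext n
  simp only [Set.mem_image, Set.mem_setOf_eq]
  constructor
  · intro hn
    by_cases hle : n ≤ (c + 1) * mult S + c
    · have h1 := descend hS c n hn hle
      have h2 : mult S ≤ n := nM_ge_mult hS (by omega) hn
      exact ⟨n - mult S, h1, by omega⟩
    · push_neg at hle
      have harith : (c + 1) * mult S = c * mult S + mult S := by ring
      have h2 : mult S ≤ n := nM_ge_mult hS (by omega) hn
      exact ⟨n - mult S, conductor_nM hS hc c _ (by omega), by omega⟩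
  · rintro ⟨y, hy, rfl⟩
    rw [nM_succ, Set.mem_add]
    exact ⟨mult S, ⟨(mult_spec hS).1, by simp [he]⟩, y, hy, by omega⟩

lemma redNum_spec (hS : IsNumSgp S) :
    nM S (redNum S + 1) = (fun y => mult S + y) '' nM S (redNum S) :=
  Nat.sInf_mem (redSet_nonempty hS)

lemma red_all (hS : IsNumSgp S) :
    ∀ t, redNum S ≤ t → nM S (t + 1) = (fun y => mult S + y) '' nM S t := by
  have base := redNum_spec hS
  intro t
  induction t with
  | zero =>
    intro h
    have h0 : redNum S = 0 := by omega
    rw [← h0]; exact base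
  | succ t ih =>
    intro h
    rcases Nat.lt_or_ge (redNum S) (t + 1) with h' | h'
    · calc nM S (t + 1 + 1) = (S \ {0}) + nM S (t + 1) := rfl
        _ = (S \ {0}) + ((fun y => mult S + y) '' nM S t) := by rw [ih (by omega)]
        _ = (fun y => mult S + y) '' ((S \ {0}) + nM S t) := by
            ext n
            simp only [Set.mem_add, Set.mem_image]
            constructor
            · rintro ⟨a, ha, y, ⟨z, hz, rfl⟩, rfl⟩
              exact ⟨a + z, ⟨a, ha, z, hz, rfl⟩, by omega⟩
            · rintro ⟨y, ⟨a, ha, z, hz, rfl⟩, rfl⟩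
              exact ⟨a, ha, mult S + z, ⟨z, hz, rfl⟩, by omega⟩
        _ = (fun y => mult S + y) '' nM S (t + 1) := rfl
    · have h0 : redNum S = t + 1 := by omega
      rw [← h0]; exact base

lemma step_down (hS : IsNumSgp S) {s u : ℕ} (hsu : s + mult S ∈ nM S u)
    (hu : redNum S + 1 ≤ u) : s ∈ nM S (u - 1) := by
  obtain ⟨u', rfl⟩ : ∃ u', u = u' + 1 := ⟨u - 1, by omega⟩
  rw [red_all hS u' (by omega)] at hsu
  obtain ⟨y, hy, hey⟩ := hsu
  have h1 : y = s := by
    have hey' : mult S + y = s + mult S := hey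
    omega
  simpa [h1] using hy

lemma ord_bound (hS : IsNumSgp S) {s : ℕ} (hs : s ∈ S) (hr : ordS S s ≤ redNum S) :
    ordS S (s + mult S) ≤ redNum S + 1 := by
  by_contra h
  push_neg at h
  have hmem : s + mult S ∈ nM S (ordS S (s + mult S)) :=
    mem_nM_ordS hS (hS.2.1 s hs _ (mult_spec hS).1)
  have := le_ordS hS (step_down hS hmem (by omega))
  omega

lemma lset_bdd (hS : IsNumSgp S) :
    BddAbove {t : ℕ | ∃ s ∈ S, ordS S s ≤ redNum S ∧
      t = ordS S (s + mult S) - ordS S (mult S) - ordS S s} := by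
  refine ⟨redNum S + 1, ?_⟩
  rintro t ⟨s, hs, hr, rfl⟩
  have := ord_bound hS hs hr
  omega

end Aux

/-- `l_e(S) = 0` iff `ord_S(s+e) = ord_S(s) + 1` for all `s ∈ S`
(iff, by García's criterion, the tangent cone `G(S)` is Cohen–Macaulay),
where `e = m(S)`. -/
theorem stmt2 (S : Set ℕ) (hS : IsNumSgp S) :
    lS S (mult S) = 0 ↔ ∀ s ∈ S, ordS S (s + mult S) = ordS S s + 1 := by
  have he := mult_spec hS
  have hord_e := ordS_mult hS
  rw [lS]
  constructor
  · intro hl s hs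
    have hge := ordS_add_mult_ge hS hs
    rcases le_or_gt (ordS S s) (redNum S) with ho | ho
    · have hmem : (ordS S (s + mult S) - ordS S (mult S) - ordS S s) ∈
          {t : ℕ | ∃ s ∈ S, ordS S s ≤ redNum S ∧
            t = ordS S (s + mult S) - ordS S (mult S) - ordS S s} := ⟨s, hs, ho, rfl⟩
      have hle := le_csSup (lset_bdd hS) hmem
      rw [hl, hord_e] at hle
      omega
    · by_contra hne
      have hu : ordS S s + 2 ≤ ordS S (s + mult S) := by omega
      have hmem : s + mult S ∈ nM S (ordS S (s + mult S)) :=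
        mem_nM_ordS hS (hS.2.1 s hs _ he.1)
      have := le_ordS hS (step_down hS hmem (by omega))
      omega
  · intro h
    have hnon : (0 : ℕ) ∈ {t : ℕ | ∃ s ∈ S, ordS S s ≤ redNum S ∧
        t = ordS S (s + mult S) - ordS S (mult S) - ordS S s} := by
      refine ⟨0, hS.1, ?_, ?_⟩ <;>
        simp [ordS_zero hS, hord_e, h 0 hS.1]
    apply le_antisymm _ (Nat.zero_le _)
    apply csSup_le ⟨0, hnon⟩
    rintro t ⟨s, hs, -, rfl⟩
    rw [h s hs, hord_e]
    omega
end

section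
/- Let S be a symmetric numerical semigroup with multiplicity e = m(S) such that ord_S(s+e) = ord_S(s)+1 for all s∈S (i.e. the tangent cone G(S) is Cohen–Macaulay). Then the following are equivalent: (1) S is M-pure; (2) β_i(ke) = β_{d(ke)−i}(ke) for some k>0 and all 0 ≤ i ≤ ⌊(d(ke)+1)/2⌋; (3) β_i(ke) = β_{d(ke)−i}(ke) for every k>0 and all 0 ≤ i ≤ ⌊(d(ke)+1)/2⌋; (4) S is M-pure with respect to ke for every k>0; (5) S is M-pure with respect to ke for some k>0. -/
open scoped Pointwise

/-!
For symmetric `S` and `x ≠ 0`, `w ↦ w' = F(S) + x - w` is an involution of `AP(S,x)`, whose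
largest element `F(S) + x` has order `d(x)`; superadditivity of the order gives
`ord w + ord w' ≤ d(x)`. M-purity with respect to `x` and the symmetry of `β_•(x)` are both
equivalent to equality for every `w`. In the first case equality makes `F(S) + x` the unique
`⪯_M`-maximal element; in the second, symmetry of `β_•(x)` gives `∑ ord w = ∑ (d(x) - ord w)`
over `AP(S,x)`, so the inequalities sum to an equality. When the tangent cone is Cohen–Macaulay,
`AP(S,ke) = {w + je : w ∈ AP(S,e), j < k}` with `ord (w + je) = ord w + j` and `d(ke) = d(e) + k - 1`,
so the equality condition for `ke` is the one for `e`.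
-/

open Finset

section InvolutionFibers

variable {α : Type*} {A : Finset α} {σ : α → α} {f : α → ℕ} {d : ℕ}

theorem card_fiber_eq_card_fiber_sub_of_add_eq (hσ : ∀ a ∈ A, σ a ∈ A)
    (hσσ : ∀ a ∈ A, σ (σ a) = a) (hadd : ∀ a ∈ A, f a + f (σ a) = d) {j : ℕ} (hj : j ≤ d) :
    #{a ∈ A | f a = j} = #{a ∈ A | f a = d - j} := by
  refine card_nbij' σ σ (fun a ha => ?_) (fun a ha => ?_) (fun a ha => ?_) (fun a ha => ?_)
  all_goals
    simp only [coe_filter, Set.mem_ofPred_eq] at ha ⊢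
    have := hadd a ha.1
  · exact ⟨hσ a ha.1, by omega⟩
  · exact ⟨hσ a ha.1, by omega⟩
  · exact hσσ a ha.1
  · exact hσσ a ha.1

theorem sum_eq_sum_sub_of_card_fiber_eq (hf : ∀ a ∈ A, f a ≤ d)
    (hfib : ∀ j ≤ d, #{a ∈ A | f a = j} = #{a ∈ A | f a = d - j}) :
    ∑ a ∈ A, f a = ∑ a ∈ A, (d - f a) := by
  have hsum_comp (g : ℕ → ℕ) :
      ∑ a ∈ A, g (f a) = ∑ j ∈ range (d + 1), #{a ∈ A | f a = j} * g j := by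
    rw [← sum_fiberwise_of_maps_to (t := range (d + 1))
      (fun a ha => mem_range.2 (Nat.lt_succ_of_le (hf a ha)))]
    refine sum_congr rfl fun j _ => ?_
    rw [sum_congr rfl fun a ha => congrArg g (mem_filter.1 ha).2, sum_const, smul_eq_mul]
  calc ∑ a ∈ A, f a
      = ∑ j ∈ range (d + 1), #{a ∈ A | f a = j} * j := hsum_comp id
    _ = ∑ j ∈ range (d + 1), #{a ∈ A | f a = d - j} * (d - j) :=
        (sum_range_reflect (fun j => #{a ∈ A | f a = j} * j) (d + 1)).symm
    _ = ∑ j ∈ range (d + 1), #{a ∈ A | f a = j} * (d - j) :=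
        sum_congr rfl fun j hj => by rw [hfib j (Nat.le_of_lt_succ (mem_range.1 hj))]
    _ = ∑ a ∈ A, (d - f a) := (hsum_comp (d - ·)).symm

theorem add_eq_of_card_fiber_eq (hσ : ∀ a ∈ A, σ a ∈ A) (hσσ : ∀ a ∈ A, σ (σ a) = a)
    (hle : ∀ a ∈ A, f a + f (σ a) ≤ d)
    (hfib : ∀ j ≤ d, #{a ∈ A | f a = j} = #{a ∈ A | f a = d - j}) :
    ∀ a ∈ A, f a + f (σ a) = d := by
  have hf : ∀ a ∈ A, f a ≤ d := fun a ha => (Nat.le_add_right _ _).trans (hle a ha)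
  have hσsum : ∑ a ∈ A, f (σ a) = ∑ a ∈ A, f a :=
    sum_nbij' σ σ hσ hσ hσσ hσσ fun _ _ => rfl
  refine (sum_eq_sum_iff_of_le hle).1 ?_
  calc ∑ a ∈ A, (f a + f (σ a))
      = ∑ a ∈ A, f a + ∑ a ∈ A, (d - f a) := by
        rw [sum_add_distrib, hσsum, ← sum_eq_sum_sub_of_card_fiber_eq hf hfib]
    _ = ∑ a ∈ A, d := by
        rw [← sum_add_distrib]
        exact sum_congr rfl fun a ha => Nat.add_sub_cancel' (hf a ha)

end InvolutionFibers

theorem forall_le_half_eq_iff {β : ℕ → ℕ} {d : ℕ} :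
    (∀ i ≤ (d + 1) / 2, β i = β (d - i)) ↔ ∀ i ≤ d, β i = β (d - i) := by
  refine ⟨fun h i hi => ?_, fun h i hi => h i (by omega)⟩
  rcases le_or_gt i ((d + 1) / 2) with hi' | hi'
  · exact h i hi'
  · rw [h (d - i) (by omega), Nat.sub_sub_self hi]

variable {S : Set ℕ}

theorem mul_mult_le_of_mem_nM {t s : ℕ} (hs : s ∈ nM S t) : t * mult S ≤ s := by
  induction t generalizing s with
  | zero => simp
  | succ t ih =>
    obtain ⟨c, hc, s', hs', rfl⟩ := Set.mem_add.1 hs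
    have : mult S ≤ c := Nat.sInf_le hc
    rw [Nat.succ_mul]
    linarith [ih hs']

namespace IsNumSgp

variable (hS : IsNumSgp S)
include hS

theorem zero_mem : 0 ∈ S := hS.1

theorem add_mem {a b : ℕ} (ha : a ∈ S) (hb : b ∈ S) : a + b ∈ S := hS.2.1 a ha b hb

theorem mul_mem {x : ℕ} (hx : x ∈ S) (j : ℕ) : j * x ∈ S := by
  induction j with
  | zero => simpa using hS.zero_mem
  | succ j ih => simpa [Nat.succ_mul] using hS.add_mem ih hx

theorem mult_mem_and_ne_zero : mult S ∈ S ∧ mult S ≠ 0 := by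
  obtain ⟨N, hN⟩ := hS.2.2.bddAbove
  refine Nat.sInf_mem (s := {x | x ∈ S ∧ x ≠ 0}) ⟨N + 1, ?_, N.succ_ne_zero⟩
  by_contra h
  exact absurd (hN h) (by omega)

theorem mult_mem : mult S ∈ S := hS.mult_mem_and_ne_zero.1

theorem mult_ne_zero : mult S ≠ 0 := hS.mult_mem_and_ne_zero.2

theorem add_mem_nM_of_mem {t a b : ℕ} (ha : a ∈ S) (hb : b ∈ nM S t) : a + b ∈ nM S t := by
  induction t generalizing b with
  | zero => exact hS.add_mem ha hb
  | succ t ih =>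
    obtain ⟨c, hc, b', hb', rfl⟩ := Set.mem_add.1 hb
    rw [add_left_comm]
    exact Set.add_mem_add hc (ih hb')

theorem add_mem_nM {t u a b : ℕ} (ha : a ∈ nM S t) (hb : b ∈ nM S u) :
    a + b ∈ nM S (t + u) := by
  induction t generalizing a with
  | zero => simpa using hS.add_mem_nM_of_mem ha hb
  | succ t ih =>
    obtain ⟨c, hc, a', ha', rfl⟩ := Set.mem_add.1 ha
    rw [show t + 1 + u = t + u + 1 by omega, add_assoc c]
    exact Set.add_mem_add hc (ih ha')

theorem bddAbove_setOf_mem_nM (s : ℕ) : BddAbove {t | s ∈ nM S t} :=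
  ⟨s, fun t ht => (Nat.le_mul_of_pos_right t (Nat.pos_of_ne_zero hS.mult_ne_zero)).trans
    (mul_mult_le_of_mem_nM ht)⟩

theorem le_ordS {s t : ℕ} (h : s ∈ nM S t) : t ≤ ordS S s :=
  le_csSup (hS.bddAbove_setOf_mem_nM s) h

theorem mem_nM_ordS {s : ℕ} (hs : s ∈ S) : s ∈ nM S (ordS S s) :=
  Nat.sSup_mem ⟨0, hs⟩ (hS.bddAbove_setOf_mem_nM s)

theorem ordS_zero : ordS S 0 = 0 := by
  have := mul_mult_le_of_mem_nM (hS.mem_nM_ordS hS.zero_mem)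
  simpa [hS.mult_ne_zero] using this

theorem ordS_add_ordS_le {a b : ℕ} (ha : a ∈ S) (hb : b ∈ S) :
    ordS S a + ordS S b ≤ ordS S (a + b) :=
  hS.le_ordS (hS.add_mem_nM (hS.mem_nM_ordS ha) (hS.mem_nM_ordS hb))

theorem ordS_add_mul_mult (hCM : ∀ s ∈ S, ordS S (s + mult S) = ordS S s + 1) {s : ℕ}
    (hs : s ∈ S) (j : ℕ) : ordS S (s + j * mult S) = ordS S s + j := by
  induction j with
  | zero => simp
  | succ j ih =>
    rw [Nat.succ_mul, ← add_assoc, hCM _ (hS.add_mem hs (hS.mul_mem hS.mult_mem j)), ih,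
      add_assoc]

end IsNumSgp

/-- For `x ≠ 0` and symmetric `S` this is `F(S) + x ≥ 0`, the largest element of `AP(S,x)`. -/
noncomputable def apTop (S : Set ℕ) (x : ℕ) : ℕ := (Frob S + x).toNat

def ApOrdPaired (S : Set ℕ) (x : ℕ) : Prop :=
  ∀ w ∈ Ap S x, ordS S w + ordS S (apTop S x - w) = ordS S (apTop S x)

theorem zero_mem_Ap (hS : IsNumSgp S) {x : ℕ} (hx0 : x ≠ 0) : 0 ∈ Ap S x :=
  ⟨hS.zero_mem, fun ⟨_, _, h⟩ => hx0 (by omega)⟩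

namespace IsSymmetric

variable (hsym : IsSymmetric S)
include hsym

theorem natCast_apTop {x : ℕ} (hx0 : x ≠ 0) : (apTop S x : ℤ) = Frob S + x := by
  obtain ⟨t, -, ht⟩ : zmem S (Frob S + x) := by
    rw [hsym, sub_add_cancel_left]
    rintro ⟨t, -, ht⟩
    omega
  unfold apTop
  omega

theorem le_apTop_and_apTop_sub_mem_Ap {x w : ℕ} (hw : w ∈ Ap S x) :
    w ≤ apTop S x ∧ apTop S x - w ∈ Ap S x := by
  obtain ⟨t, ht, hteq⟩ : zmem S (Frob S + x - w) := by
    rw [hsym, show Frob S - (Frob S + x - w) = (w : ℤ) - x by ring]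
    rintro ⟨t, htS, ht⟩
    exact hw.2 ⟨t, htS, by omega⟩
  unfold apTop
  refine ⟨by omega, by convert ht using 1; omega, ?_⟩
  rintro ⟨t', ht', ht'eq⟩
  exact (hsym w).1 ⟨w, hw.1, rfl⟩ ⟨t', ht', by omega⟩

theorem le_apTop {x w : ℕ} (hw : w ∈ Ap S x) : w ≤ apTop S x :=
  (hsym.le_apTop_and_apTop_sub_mem_Ap hw).1

theorem apTop_sub_mem_Ap {x w : ℕ} (hw : w ∈ Ap S x) : apTop S x - w ∈ Ap S x :=
  (hsym.le_apTop_and_apTop_sub_mem_Ap hw).2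

theorem apTop_mem_Ap (hS : IsNumSgp S) {x : ℕ} (hx0 : x ≠ 0) : apTop S x ∈ Ap S x := by
  simpa using hsym.apTop_sub_mem_Ap (zero_mem_Ap hS hx0)

theorem finite_Ap (x : ℕ) : (Ap S x).Finite :=
  (Set.finite_Iic (apTop S x)).subset fun _ => hsym.le_apTop

theorem ordS_add_ordS_apTop_sub_le (hS : IsNumSgp S) {x w : ℕ} (hw : w ∈ Ap S x) :
    ordS S w + ordS S (apTop S x - w) ≤ ordS S (apTop S x) := by
  simpa [Nat.add_sub_cancel' (hsym.le_apTop hw)] using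
    hS.ordS_add_ordS_le hw.1 (hsym.apTop_sub_mem_Ap hw).1

theorem dS_eq_ordS_apTop (hS : IsNumSgp S) {x : ℕ} (hx0 : x ≠ 0) :
    dS S x = ordS S (apTop S x) := by
  refine IsGreatest.csSup_eq ⟨⟨_, hsym.apTop_mem_Ap hS hx0, rfl⟩, ?_⟩
  rintro _ ⟨w, hw, rfl⟩
  exact (Nat.le_add_right _ _).trans (hsym.ordS_add_ordS_apTop_sub_le hS hw)

theorem apTop_mul {x k : ℕ} (hx0 : x ≠ 0) (hk : 0 < k) :
    apTop S (k * x) = apTop S x + (k - 1) * x := by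
  have h₁ := hsym.natCast_apTop (Nat.mul_ne_zero hk.ne' hx0)
  have h₂ := hsym.natCast_apTop hx0
  zify [hk] at h₁ h₂ ⊢
  rw [h₁, h₂]
  ring

end IsSymmetric

/-- The paper's `u ⪯_M v`. -/
def MLe (S : Set ℕ) (u v : ℕ) : Prop := ∃ z ∈ S, v = u + z ∧ ordS S v = ordS S u + ordS S z

theorem MLe.refl (hS : IsNumSgp S) (u : ℕ) : MLe S u u :=
  ⟨0, hS.zero_mem, rfl, by rw [hS.ordS_zero, add_zero]⟩

theorem MLe.trans (hS : IsNumSgp S) {u v w : ℕ} (hu : u ∈ S) (huv : MLe S u v)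
    (hvw : MLe S v w) : MLe S u w := by
  obtain ⟨z, hz, rfl, hv⟩ := huv
  obtain ⟨z', hz', rfl, hw⟩ := hvw
  refine ⟨z + z', hS.add_mem hz hz', by rw [add_assoc], le_antisymm ?_ ?_⟩
  · linarith [hS.ordS_add_ordS_le hz hz']
  · simpa [add_assoc] using hS.ordS_add_ordS_le hu (hS.add_mem hz hz')

theorem mLe_apTop_iff (hsym : IsSymmetric S) {x w : ℕ} (hw : w ∈ Ap S x) :
    MLe S w (apTop S x) ↔ ordS S w + ordS S (apTop S x - w) = ordS S (apTop S x) := by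
  have hle := hsym.le_apTop hw
  constructor
  · rintro ⟨z, -, hz, hord⟩
    rwa [hz, Nat.add_sub_cancel_left, ← hz, eq_comm]
  · exact fun h => ⟨_, (hsym.apTop_sub_mem_Ap hw).1, (Nat.add_sub_cancel' hle).symm, h.symm⟩

theorem apOrdPaired_iff_forall_mLe (hsym : IsSymmetric S) {x : ℕ} :
    ApOrdPaired S x ↔ ∀ w ∈ Ap S x, MLe S w (apTop S x) :=
  forall₂_congr fun _ hw => (mLe_apTop_iff hsym hw).symm

theorem apTop_mem_MaxMAp (hS : IsNumSgp S) (hsym : IsSymmetric S) {x : ℕ} (hx0 : x ≠ 0) :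
    apTop S x ∈ MaxMAp S x := by
  refine ⟨hsym.apTop_mem_Ap hS hx0, ?_⟩
  rintro y hy ⟨z, -, rfl, -⟩
  have := hsym.le_apTop hy
  omega

theorem exists_mem_MaxMAp_mLe (hS : IsNumSgp S) (hsym : IsSymmetric S) {x w : ℕ}
    (hw : w ∈ Ap S x) : ∃ y ∈ MaxMAp S x, MLe S w y := by
  -- a numerically largest `y ∈ AP(S,x)` with `w ⪯_M y` is `⪯_M`-maximal, by transitivity
  obtain ⟨y, ⟨hy, hwy⟩, hmax⟩ := Set.exists_max_image {y ∈ Ap S x | MLe S w y} id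
    ((hsym.finite_Ap x).subset fun _ h => h.1) ⟨w, hw, MLe.refl hS w⟩
  refine ⟨y, ⟨hy, fun y' hy' hyy' => ?_⟩, hwy⟩
  have := hmax y' ⟨hy', hwy.trans hS hw.1 hyy'⟩
  obtain ⟨z, -, rfl, -⟩ := hyy'
  simp only [id] at this
  omega

theorem mPureWrt_iff_apOrdPaired (hS : IsNumSgp S) (hsym : IsSymmetric S) {x : ℕ}
    (hx0 : x ≠ 0) : MPureWrt S x ↔ ApOrdPaired S x := by
  rw [apOrdPaired_iff_forall_mLe hsym]
  constructor
  · intro hpure w hw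
    obtain ⟨y, hy, hwy⟩ := exists_mem_MaxMAp_mLe hS hsym hw
    have hyTop : MLe S y (apTop S x) := by
      have := hsym.ordS_add_ordS_apTop_sub_le hS hy.1
      have := hpure y hy _ (apTop_mem_MaxMAp hS hsym hx0)
      rw [mLe_apTop_iff hsym hy.1]
      omega
    exact hwy.trans hS hw.1 hyTop
  · intro h w hw w' hw'
    rw [← hw.2 _ (hsym.apTop_mem_Ap hS hx0) (h w hw.1),
      ← hw'.2 _ (hsym.apTop_mem_Ap hS hx0) (h w' hw'.1)]

theorem betaS_eq_card_filter (hsym : IsSymmetric S) (x i : ℕ) :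
    betaS S x i = #{w ∈ (hsym.finite_Ap x).toFinset | ordS S w = i} := by
  rw [betaS, ← Set.ncard_coe_finset, coe_filter]
  simp only [Set.Finite.mem_toFinset]

theorem betaS_symm_iff_apOrdPaired (hS : IsNumSgp S) (hsym : IsSymmetric S) {x : ℕ}
    (hx0 : x ≠ 0) :
    (∀ i ≤ dS S x, betaS S x i = betaS S x (dS S x - i)) ↔ ApOrdPaired S x := by
  have hσ : ∀ w ∈ (hsym.finite_Ap x).toFinset, apTop S x - w ∈ (hsym.finite_Ap x).toFinset :=
    fun w hw => by simpa using hsym.apTop_sub_mem_Ap (by simpa using hw)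
  have hσσ : ∀ w ∈ (hsym.finite_Ap x).toFinset, apTop S x - (apTop S x - w) = w :=
    fun w hw => Nat.sub_sub_self (hsym.le_apTop (by simpa using hw))
  simp only [hsym.dS_eq_ordS_apTop hS hx0, betaS_eq_card_filter hsym]
  constructor
  · intro h w hw
    exact add_eq_of_card_fiber_eq (f := ordS S) hσ hσσ
      (fun w hw => hsym.ordS_add_ordS_apTop_sub_le hS (by simpa using hw)) h w (by simpa using hw)
  · exact fun h i hi => card_fiber_eq_card_fiber_sub_of_add_eq hσ hσσ
      (fun w hw => h w (by simpa using hw)) hi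

theorem exists_mem_Ap_eq_add_mul {x : ℕ} (hx0 : x ≠ 0) {s : ℕ} (hs : s ∈ S) :
    ∃ w ∈ Ap S x, ∃ n, s = w + n * x := by
  induction s using Nat.strong_induction_on with
  | _ s ih =>
    by_cases h : ∃ t ∈ S, s = t + x
    · obtain ⟨t, ht, rfl⟩ := h
      obtain ⟨w, hw, n, rfl⟩ := ih t (by omega) ht
      exact ⟨w, hw, n + 1, by ring⟩
    · exact ⟨s, ⟨hs, h⟩, 0, by simp⟩

section MulMult

variable (hS : IsNumSgp S)
include hS

theorem Ap_subset_Ap_mul {x k : ℕ} (hx : x ∈ S) (hk : 0 < k) : Ap S x ⊆ Ap S (k * x) := by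
  refine fun w hw => ⟨hw.1, fun ⟨t, ht, hteq⟩ => hw.2 ⟨t + (k - 1) * x, hS.add_mem ht
    (hS.mul_mem hx _), ?_⟩⟩
  rw [hteq, add_assoc, ← Nat.succ_mul, Nat.succ_eq_add_one, Nat.sub_add_cancel hk]

theorem exists_of_mem_Ap_mul {x k u : ℕ} (hx : x ∈ S) (hx0 : x ≠ 0) (hu : u ∈ Ap S (k * x)) :
    ∃ w ∈ Ap S x, ∃ j < k, u = w + j * x := by
  obtain ⟨w, hw, n, rfl⟩ := exists_mem_Ap_eq_add_mul hx0 hu.1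
  refine ⟨w, hw, n, lt_of_not_ge fun hn => hu.2 ⟨w + (n - k) * x, hS.add_mem hw.1
    (hS.mul_mem hx _), ?_⟩, rfl⟩
  rw [add_assoc, ← Nat.add_mul, Nat.sub_add_cancel hn]

variable (hsym : IsSymmetric S) (hCM : ∀ s ∈ S, ordS S (s + mult S) = ordS S s + 1)
include hsym hCM

theorem ordS_apTop_mul_mult {k : ℕ} (hk : 0 < k) :
    ordS S (apTop S (k * mult S)) = ordS S (apTop S (mult S)) + (k - 1) := by
  rw [hsym.apTop_mul hS.mult_ne_zero hk,
    hS.ordS_add_mul_mult hCM (hsym.apTop_mem_Ap hS hS.mult_ne_zero).1]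

theorem ordS_add_ordS_apTop_mul_mult_sub {k j w : ℕ} (hw : w ∈ Ap S (mult S)) (hj : j < k) :
    ordS S (w + j * mult S) + ordS S (apTop S (k * mult S) - (w + j * mult S)) =
      ordS S w + ordS S (apTop S (mult S) - w) + (k - 1) := by
  have hsub : apTop S (k * mult S) - (w + j * mult S) =
      (apTop S (mult S) - w) + (k - 1 - j) * mult S := by
    have hw' := hsym.le_apTop hw
    have hsplit : (k - 1) * mult S = j * mult S + (k - 1 - j) * mult S := by
      rw [← Nat.add_mul, Nat.add_sub_cancel' (by omega)]
    rw [hsym.apTop_mul hS.mult_ne_zero (by omega), hsplit]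
    omega
  rw [hsub, hS.ordS_add_mul_mult hCM hw.1,
    hS.ordS_add_mul_mult hCM (hsym.apTop_sub_mem_Ap hw).1]
  omega

theorem apOrdPaired_mul_mult_iff {k : ℕ} (hk : 0 < k) :
    ApOrdPaired S (k * mult S) ↔ ApOrdPaired S (mult S) := by
  simp only [ApOrdPaired, ordS_apTop_mul_mult hS hsym hCM hk]
  constructor
  · intro h w hw
    have := ordS_add_ordS_apTop_mul_mult_sub (j := 0) hS hsym hCM hw hk
    rw [zero_mul, add_zero, h w (Ap_subset_Ap_mul hS hS.mult_mem hk hw)] at this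
    omega
  · intro h u hu
    obtain ⟨w, hw, j, hj, rfl⟩ := exists_of_mem_Ap_mul hS hS.mult_mem hS.mult_ne_zero hu
    rw [ordS_add_ordS_apTop_mul_mult_sub hS hsym hCM hw hj, h w hw]

end MulMult

/-- for a symmetric numerical semigroup `S` whose tangent cone is
Cohen–Macaulay (i.e. `ord_S(s+e) = ord_S(s)+1` for all `s ∈ S`, `e = m(S)`),
the following are equivalent:
(1) `S` is M-pure;
(2) `β_i(ke) = β_{d(ke)-i}(ke)` for some `k > 0` and all `0 ≤ i ≤ ⌊(d(ke)+1)/2⌋`;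
(3) the same for every `k > 0`;
(4) `S` is M-pure with respect to `ke` for every `k > 0`;
(5) `S` is M-pure with respect to `ke` for some `k > 0`. -/
theorem stmt5 (S : Set ℕ) (hS : IsNumSgp S) (hsym : IsSymmetric S)
    (hCM : ∀ s ∈ S, ordS S (s + mult S) = ordS S s + 1) :
    List.TFAE
      [ MPure S,
        ∃ k : ℕ, 0 < k ∧ ∀ i : ℕ, i ≤ (dS S (k * mult S) + 1) / 2 →
          betaS S (k * mult S) i = betaS S (k * mult S) (dS S (k * mult S) - i),
        ∀ k : ℕ, 0 < k → ∀ i : ℕ, i ≤ (dS S (k * mult S) + 1) / 2 →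
          betaS S (k * mult S) i = betaS S (k * mult S) (dS S (k * mult S) - i),
        ∀ k : ℕ, 0 < k → MPureWrt S (k * mult S),
        ∃ k : ℕ, 0 < k ∧ MPureWrt S (k * mult S) ] := by
  have hke0 {k : ℕ} (hk : 0 < k) : k * mult S ≠ 0 := Nat.mul_ne_zero hk.ne' hS.mult_ne_zero
  have hpure {k : ℕ} (hk : 0 < k) : MPureWrt S (k * mult S) ↔ ApOrdPaired S (mult S) :=
    (mPureWrt_iff_apOrdPaired hS hsym (hke0 hk)).trans (apOrdPaired_mul_mult_iff hS hsym hCM hk)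
  have hbeta {k : ℕ} (hk : 0 < k) :
      (∀ i ≤ (dS S (k * mult S) + 1) / 2,
        betaS S (k * mult S) i = betaS S (k * mult S) (dS S (k * mult S) - i)) ↔
        ApOrdPaired S (mult S) :=
    forall_le_half_eq_iff.trans <| (betaS_symm_iff_apOrdPaired hS hsym (hke0 hk)).trans
      (apOrdPaired_mul_mult_iff hS hsym hCM hk)
  have h1 : MPure S ↔ ApOrdPaired S (mult S) := by simpa [MPure] using hpure one_pos
  tfae_have 1 → 4 := fun h k hk => (hpure hk).2 (h1.1 h)
  tfae_have 4 → 3 := fun h k hk => (hbeta hk).2 ((hpure hk).1 (h k hk))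
  tfae_have 3 → 2 := fun h => ⟨1, one_pos, h 1 one_pos⟩
  tfae_have 2 → 5 := fun ⟨k, hk, h⟩ => ⟨k, hk, (hpure hk).2 ((hbeta hk).1 h)⟩
  tfae_have 5 → 1 := fun ⟨k, hk, h⟩ => h1.2 ((hpure hk).1 h)
  tfae_finish
end

section
/- Let S = ⟨qm₁,…,qm_d, pn₁,…,pn_k⟩ be a gluing of S₁ and S₂, let x∈S₁ be nonzero, z₁∈S₁ and z₂∈S₂. Then: (1) if u = qz₁ + pz₂ ∈ Max AP(S, qx) and z₂∈AP(S₂,q), then z₁∈Max AP(S₁,x) and z₂∈Max AP(S₂,q); (2) if z₁∈Max AP(S₁,x) and z₂∈Max AP(S₂,q), and Max AP(S₁,x) is a singleton or Max AP(S₂,q) is a singleton, then qz₁ + pz₂ ∈ Max AP(S, qx). -/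
open scoped Pointwise

/-!
By coprimality of `p` and `q`, every element of `S` can be written uniquely as `q a + p b`
with `a ∈ S₁` and `b ∈ Ap(S₂, q)`, and then `q a + p b ∈ Ap(S, q x)` exactly when
`a ∈ Ap(S₁, x)`. Both parts follow by comparing `⪯` on these normal forms: moving up from
`q z₁ + p z₂` by `q c + p e` and renormalising `z₂ + e = b + f q` moves `z₁` up by `c + f p`
inside `Ap(S₁, x)` and `z₂` up to `b` inside `Ap(S₂, q)`.
-/

open Set

lemma Nat.one_mem_of_one_mem_addSubmonoidClosure {T : Set ℕ}
    (h : 1 ∈ AddSubmonoid.closure T) : 1 ∈ T := by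
  suffices ∀ c ∈ AddSubmonoid.closure T, c = 1 → 1 ∈ T from this 1 h rfl
  intro c hc
  induction hc using AddSubmonoid.closure_induction with
  | mem c hc => rintro rfl; exact hc
  | zero => simp
  | add a b _ _ iha ihb =>
    intro hab
    rcases Nat.add_eq_one_iff.mp hab with ⟨-, hb⟩ | ⟨ha, -⟩
    · exact ihb hb
    · exact iha ha

lemma ne_zero_of_mem_ap {S : Set ℕ} {q b : ℕ} (hb : b ∈ Ap S q) : q ≠ 0 := by
  rintro rfl
  exact hb.2 ⟨b, hb.1, rfl⟩

lemma exists_mem_ap_eq_add_mul {S : Set ℕ} {q b : ℕ} (hq0 : q ≠ 0) (hb : b ∈ S) :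
    ∃ b' ∈ Ap S q, ∃ f, b = b' + f * q := by
  induction b using Nat.strong_induction_on with
  | _ b ih =>
    by_cases hsub : ∃ t ∈ S, b = t + q
    · obtain ⟨t, ht, rfl⟩ := hsub
      obtain ⟨b', hb', f, rfl⟩ := ih t (by omega) ht
      exact ⟨b', hb', f + 1, by ring⟩
    · exact ⟨b, ⟨hb, hsub⟩, 0, by simp⟩

section Glue

variable {A B : AddSubmonoid ℕ} {p q : ℕ}

lemma eq_of_mem_ap_of_modEq (hq : q ∈ B) {b b' : ℕ} (hb : b ∈ Ap B q) (hb' : b' ∈ Ap B q)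
    (h : b ≡ b' [MOD q]) : b = b' := by
  wlog hle : b ≤ b' generalizing b b'
  · exact (this hb' hb h.symm (by omega)).symm
  obtain ⟨t, ht⟩ := (Nat.modEq_iff_dvd' hle).mp h
  cases t with
  | zero => omega
  | succ t =>
    refine absurd ⟨b + t • q, B.add_mem hb.1 (B.nsmul_mem hq t), ?_⟩ hb'.2
    rw [smul_eq_mul]
    grind

lemma eq_and_eq_of_mul_add_mul_eq (hpq : p.Coprime q) (hq : q ∈ B) {a a' b b' : ℕ}
    (hb : b ∈ Ap B q) (hb' : b' ∈ Ap B q) (h : q * a + p * b = q * a' + p * b') :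
    a = a' ∧ b = b' := by
  have hmod : p * b ≡ p * b' [MOD q] := by
    simpa only [Nat.ModEq, Nat.mul_add_mod] using congrArg (· % q) h
  obtain rfl := eq_of_mem_ap_of_modEq hq hb hb' (hmod.cancel_left_of_coprime hpq.symm)
  exact ⟨Nat.eq_of_mul_eq_mul_left (Nat.pos_of_ne_zero (ne_zero_of_mem_ap hb)) (by omega), rfl⟩

lemma exists_mem_ap_of_mem_image2 (hp : p ∈ A) (hq0 : q ≠ 0) {s : ℕ}
    (hs : s ∈ image2 (fun a b => q * a + p * b) A B) :
    ∃ a ∈ A, ∃ b ∈ Ap B q, q * a + p * b = s := by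
  obtain ⟨a, ha, b, hb, rfl⟩ := hs
  obtain ⟨b', hb', f, rfl⟩ := exists_mem_ap_eq_add_mul hq0 hb
  exact ⟨a + f • p, A.add_mem ha (A.nsmul_mem hp f), b', hb', by rw [smul_eq_mul]; ring⟩

lemma mul_add_mul_mem_ap_image2_iff (hpq : p.Coprime q) (hp : p ∈ A) (hq : q ∈ B)
    {x a b : ℕ} (ha : a ∈ A) (hb : b ∈ Ap B q) :
    q * a + p * b ∈ Ap (image2 (fun a b => q * a + p * b) A B) (q * x) ↔ a ∈ Ap A x := by
  constructor
  · rintro ⟨-, hu⟩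
    refine ⟨ha, ?_⟩
    rintro ⟨t, ht, rfl⟩
    exact hu ⟨q * t + p * b, ⟨t, ht, b, hb.1, rfl⟩, by ring⟩
  · rintro ⟨-, hax⟩
    refine ⟨⟨a, ha, b, hb.1, rfl⟩, ?_⟩
    rintro ⟨_, ht, heq⟩
    obtain ⟨a', ha', b', hb', rfl⟩ := exists_mem_ap_of_mem_image2 hp (ne_zero_of_mem_ap hb) ht
    have hrep : q * a + p * b = q * (a' + x) + p * b' := by rw [heq]; ring
    exact hax ⟨a', ha', (eq_and_eq_of_mul_add_mul_eq hpq hq hb hb' hrep).1⟩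

lemma mem_maxAp_of_mul_add_mul_mem_maxAp_image2 (hpq : p.Coprime q) (hp : p ∈ A) (hq : q ∈ B)
    {x z₁ z₂ : ℕ} (hz₁ : z₁ ∈ A) (hz₂ : z₂ ∈ Ap B q)
    (hu : q * z₁ + p * z₂ ∈ MaxAp (image2 (fun a b => q * a + p * b) A B) (q * x)) :
    z₁ ∈ MaxAp A x ∧ z₂ ∈ MaxAp B q := by
  have hz₁x : z₁ ∈ Ap A x := (mul_add_mul_mem_ap_image2_iff hpq hp hq hz₁ hz₂).1 hu.1
  refine ⟨⟨hz₁x, ?_⟩, ⟨hz₂, ?_⟩⟩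
  · rintro _ hy ⟨c, hc, rfl⟩
    have hmax := hu.2 _ ((mul_add_mul_mem_ap_image2_iff hpq hp hq (A.add_mem hz₁ hc) hz₂).2 hy)
      ⟨q * c, ⟨c, hc, 0, B.zero_mem, by ring⟩, by ring⟩
    exact (eq_and_eq_of_mul_add_mul_eq hpq hq hz₂ hz₂ hmax).1
  · rintro _ hy ⟨e, he, rfl⟩
    have hmax := hu.2 _ ((mul_add_mul_mem_ap_image2_iff hpq hp hq hz₁ hy).2 hz₁x)
      ⟨p * e, ⟨0, A.zero_mem, e, he, by ring⟩, by ring⟩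
    exact (eq_and_eq_of_mul_add_mul_eq hpq hq hy hz₂ hmax).2

lemma mul_add_mul_mem_maxAp_image2 (hpq : p.Coprime q) (hp : p ∈ A) (hq : q ∈ B) (hp0 : p ≠ 0)
    {x z₁ z₂ : ℕ} (h₁ : z₁ ∈ MaxAp A x) (h₂ : z₂ ∈ MaxAp B q) :
    q * z₁ + p * z₂ ∈ MaxAp (image2 (fun a b => q * a + p * b) A B) (q * x) := by
  refine ⟨(mul_add_mul_mem_ap_image2_iff hpq hp hq h₁.1.1 h₂.1).2 h₁.1, ?_⟩
  rintro _ hv ⟨_, ⟨c, hc, e, he, rfl⟩, rfl⟩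
  obtain ⟨b, hb, f, hf⟩ := exists_mem_ap_eq_add_mul (ne_zero_of_mem_ap h₂.1) (B.add_mem h₂.1.1 he)
  have hcf : c + f • p ∈ A := A.add_mem hc (A.nsmul_mem hp f)
  have hrep : q * z₁ + p * z₂ + (q * c + p * e) = q * (z₁ + (c + f • p)) + p * b := by
    calc _ = q * (z₁ + c) + p * (z₂ + e) := by ring
      _ = _ := by rw [hf, smul_eq_mul]; ring
  rw [hrep] at hv
  have hz₁cf := h₁.2 _ ((mul_add_mul_mem_ap_image2_iff hpq hp hq (A.add_mem h₁.1.1 hcf) hb).1 hv)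
    ⟨_, hcf, rfl⟩
  obtain ⟨hc0, hf0⟩ : c = 0 ∧ f = 0 := by simpa [hp0] using hz₁cf
  have he0 : e = 0 := by
    rw [hf0, zero_mul, add_zero] at hf
    have := h₂.2 b hb ⟨e, he, hf.symm⟩
    omega
  simp [hc0, he0]

end Glue

lemma Gluing.p_ne_zero (G : Gluing) : G.p ≠ 0 := by
  intro hp
  have hq : G.q = 1 := by simpa [hp] using G.hpq
  exact G.hqn (hq ▸ Nat.one_mem_of_one_mem_addSubmonoidClosure (hq ▸ G.hq))

lemma Gluing.S_eq_image2 (G : Gluing) :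
    G.S = image2 (fun a b => G.q * a + G.p * b) G.S₁ G.S₂ := by
  ext s
  rw [Gluing.S, AddSubmonoid.closure_union,
    show (fun x => G.q * x) = ⇑(AddMonoidHom.mulLeft G.q) from rfl,
    show (fun x => G.p * x) = ⇑(AddMonoidHom.mulLeft G.p) from rfl,
    ← AddMonoidHom.map_mclosure, ← AddMonoidHom.map_mclosure]
  simp only [SetLike.mem_coe, AddSubmonoid.mem_sup, AddSubmonoid.mem_map, mem_image2,
    AddMonoidHom.coe_mulLeft, Gluing.S₁, Gluing.S₂]
  constructor
  · rintro ⟨_, ⟨a, ha, rfl⟩, _, ⟨b, hb, rfl⟩, rfl⟩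
    exact ⟨a, ha, b, hb, rfl⟩
  · rintro ⟨a, ha, b, hb, rfl⟩
    exact ⟨_, ⟨a, ha, rfl⟩, _, ⟨b, hb, rfl⟩, rfl⟩

theorem stmt9_general (G : Gluing) (x : ℕ)
    (z₁ z₂ : ℕ) (hz₁ : z₁ ∈ G.S₁) :
    (G.q * z₁ + G.p * z₂ ∈ MaxAp G.S (G.q * x) → z₂ ∈ Ap G.S₂ G.q →
      z₁ ∈ MaxAp G.S₁ x ∧ z₂ ∈ MaxAp G.S₂ G.q) ∧
    (z₁ ∈ MaxAp G.S₁ x → z₂ ∈ MaxAp G.S₂ G.q →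
      ((∃ w, MaxAp G.S₁ x = {w}) ∨ (∃ w, MaxAp G.S₂ G.q = {w})) →
      G.q * z₁ + G.p * z₂ ∈ MaxAp G.S (G.q * x)) := by
  rw [G.S_eq_image2]
  exact ⟨fun hu hz₂ => mem_maxAp_of_mul_add_mul_mem_maxAp_image2 G.hpq G.hp G.hq hz₁ hz₂ hu,
    fun h₁ h₂ _ => mul_add_mul_mem_maxAp_image2 G.hpq G.hp G.hq G.p_ne_zero h₁ h₂⟩

/-- for a gluing `S` of `S₁` and `S₂`, nonzero `x ∈ S₁`, `z₁ ∈ S₁`, `z₂ ∈ S₂`: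
(1) if `qz₁ + pz₂ ∈ Max AP(S, qx)` and `z₂ ∈ AP(S₂,q)`, then `z₁ ∈ Max AP(S₁,x)`
    and `z₂ ∈ Max AP(S₂,q)`;
(2) if `z₁ ∈ Max AP(S₁,x)`, `z₂ ∈ Max AP(S₂,q)`, and `Max AP(S₁,x)` or `Max AP(S₂,q)`
    is a singleton, then `qz₁ + pz₂ ∈ Max AP(S, qx)`. -/
theorem stmt9 (G : Gluing) (x : ℕ) (hx : x ∈ G.S₁) (hx0 : x ≠ 0)
    (z₁ z₂ : ℕ) (hz₁ : z₁ ∈ G.S₁) (hz₂ : z₂ ∈ G.S₂) :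
    (G.q * z₁ + G.p * z₂ ∈ MaxAp G.S (G.q * x) → z₂ ∈ Ap G.S₂ G.q →
      z₁ ∈ MaxAp G.S₁ x ∧ z₂ ∈ MaxAp G.S₂ G.q) ∧
    (z₁ ∈ MaxAp G.S₁ x → z₂ ∈ MaxAp G.S₂ G.q →
      ((∃ w, MaxAp G.S₁ x = {w}) ∨ (∃ w, MaxAp G.S₂ G.q = {w})) →
      G.q * z₁ + G.p * z₂ ∈ MaxAp G.S (G.q * x)) :=
  stmt9_general G x z₁ z₂ hz₁
end

section
/- Let S = ⟨qm₁,…,qm_d, pn₁,…,pn_k⟩ be a gluing of S₁ and S₂. Then the following are equivalent: (1) S is symmetric and S₁ (or S₂) is symmetric; (2) both S₁ and S₂ are symmetric. -/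
open scoped Pointwise

/-!
Write `S = q S₁ + p S₂` and `F₁, F₂` for the Frobenius numbers of `S₁, S₂`. By Bézout every integer
is `q a + p b`, and its representations are exactly `q (a - p t) + p (b + q t)`, `t ∈ ℤ`; so
`q a + p b ∈ S` iff some `t` has `a - p t ∈ S₁` and `b + q t ∈ S₂`. The first condition is downward
closed in `t` and the second upward closed, which gives `F(S) = q F₁ + p F₂ + p q`.

If `S` is symmetric, testing the symmetry of `S` on `q (F₁ + p) + p w` (whose only possible
representation has `t ≤ 0`) shows that `S₂` is symmetric, and likewise for `S₁`. Conversely, if `S₁`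
and `S₂` are symmetric, the symmetry of `S` at `q a + p b` becomes a statement about a downward
closed and an upward closed set of integers `t`: they meet iff the complement of the first, shifted
by one, does not meet the complement of the second.
-/

lemma zmem.nonneg {U : Set ℕ} {z : ℤ} (h : zmem U z) : 0 ≤ z := by
  obtain ⟨t, -, rfl⟩ := h
  exact Int.natCast_nonneg t

lemma zmem.add_mul_of_nonneg {T : AddSubmonoid ℕ} {x k : ℤ} {c : ℕ} (hx : zmem T x) (hc : c ∈ T)
    (hk : 0 ≤ k) : zmem T (x + k * c) := by
  lift k to ℕ using hk
  obtain ⟨t, ht, rfl⟩ := hx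
  exact ⟨t + k * c, T.add_mem ht (T.nsmul_mem hc k), by push_cast; ring⟩

lemma IsSymmetric.not_zmem_iff {U : Set ℕ} (h : IsSymmetric U) (z : ℤ) :
    ¬ zmem U z ↔ zmem U (Frob U - z) := by
  rw [h z, not_not]

section Frobenius

variable {U : Set ℕ} (hU : {x : ℕ | x ∉ U}.Finite)
include hU

lemma isGreatest_frob : IsGreatest {z : ℤ | ¬ zmem U z} (Frob U) := by
  obtain ⟨B, hB⟩ := hU.bddAbove
  have hbdd : BddAbove {z : ℤ | ¬ zmem U z} := by
    refine ⟨B, fun z hz => ?_⟩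
    by_contra! hBz
    lift z to ℕ using by omega
    exact hz ⟨z, by_contra fun hzU => by have := hB hzU; omega, rfl⟩
  have hne : (-1 : ℤ) ∈ {z : ℤ | ¬ zmem U z} := fun h => by have := h.nonneg; omega
  exact ⟨Int.csSup_mem ⟨-1, hne⟩ hbdd, fun z hz => le_csSup hbdd hz⟩

lemma not_zmem_frob : ¬ zmem U (Frob U) := (isGreatest_frob hU).1

lemma zmem_of_frob_lt {z : ℤ} (hz : Frob U < z) : zmem U z := by
  by_contra h
  exact (isGreatest_frob hU).2 h |>.not_gt hz

end Frobenius

theorem Int.exists_and_iff_not_exists_not_and {P Q : ℤ → Prop} (hP : Antitone P)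
    (hQ : Monotone Q) (hQ_false : ∃ t, ¬ Q t) (hQ_true : ∃ t, Q t) :
    (∃ t, P t ∧ Q t) ↔ ¬ ∃ t, ¬ P (t + 1) ∧ ¬ Q t := by
  constructor
  · rintro ⟨t₀, hPt₀, hQt₀⟩ ⟨t, hPt, hQt⟩
    rcases le_or_gt (t + 1) t₀ with h | h
    · exact hPt (hP h hPt₀)
    · exact hQt (hQ (by omega) hQt₀)
  · intro h
    obtain ⟨s, hs⟩ := hQ_false
    have hbdd : ∀ t, Q t → s ≤ t := fun t ht => by
      by_contra! hts
      exact hs (hQ hts.le ht)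
    obtain ⟨t, hQt, hleast⟩ := Int.exists_least_of_bdd ⟨s, hbdd⟩ hQ_true
    refine ⟨t, by_contra fun hPt => h ⟨t - 1, by simpa using hPt, fun hQt' => ?_⟩, hQt⟩
    have := hleast _ hQt'
    omega

def glue (T₁ T₂ : AddSubmonoid ℕ) (p q : ℕ) : AddSubmonoid ℕ :=
  T₁.map (AddMonoidHom.mulLeft q) ⊔ T₂.map (AddMonoidHom.mulLeft p)

section Glue

variable {T₁ T₂ : AddSubmonoid ℕ} {p q : ℕ}

lemma mem_glue {x : ℕ} : x ∈ glue T₁ T₂ p q ↔ ∃ a ∈ T₁, ∃ b ∈ T₂, q * a + p * b = x := by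
  simp only [glue, AddSubmonoid.mem_sup, AddSubmonoid.mem_map, AddMonoidHom.coe_mulLeft]
  constructor
  · rintro ⟨_, ⟨a, ha, rfl⟩, _, ⟨b, hb, rfl⟩, rfl⟩
    exact ⟨a, ha, b, hb, rfl⟩
  · rintro ⟨a, ha, b, hb, rfl⟩
    exact ⟨_, ⟨a, ha, rfl⟩, _, ⟨b, hb, rfl⟩, rfl⟩

lemma glue_comm : glue T₁ T₂ p q = glue T₂ T₁ q p := sup_comm _ _

lemma zmem_glue_iff {z : ℤ} :
    zmem (glue T₁ T₂ p q) z ↔ ∃ a b : ℤ, zmem T₁ a ∧ zmem T₂ b ∧ q * a + p * b = z := by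
  constructor
  · rintro ⟨x, hx, rfl⟩
    obtain ⟨a, ha, b, hb, rfl⟩ := mem_glue.1 hx
    exact ⟨a, b, ⟨a, ha, rfl⟩, ⟨b, hb, rfl⟩, by push_cast; ring⟩
  · rintro ⟨_, _, ⟨a, ha, rfl⟩, ⟨b, hb, rfl⟩, rfl⟩
    exact ⟨_, mem_glue.2 ⟨a, ha, b, hb, rfl⟩, by push_cast; ring⟩

lemma zmem_glue_add_iff (hq₀ : 0 < q) (hpq : Nat.Coprime p q) (a b : ℤ) :
    zmem (glue T₁ T₂ p q) (q * a + p * b) ↔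
      ∃ t : ℤ, zmem T₁ (a - p * t) ∧ zmem T₂ (b + q * t) := by
  rw [zmem_glue_iff]
  constructor
  · rintro ⟨a', b', ha', hb', heq⟩
    obtain ⟨t, ht⟩ : (q : ℤ) ∣ b' - b :=
      (Nat.isCoprime_iff_coprime.2 hpq).symm.dvd_of_dvd_mul_left ⟨a - a', by linear_combination heq⟩
    have ha : a' = a - p * t :=
      mul_left_cancel₀ (by positivity : (q : ℤ) ≠ 0) (by linear_combination heq - p * ht)
    exact ⟨t, ha ▸ ha', (by linear_combination ht : b' = b + q * t) ▸ hb'⟩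
  · rintro ⟨t, ha, hb⟩
    exact ⟨_, _, ha, hb, by ring⟩

end Glue

section GlueFrobenius

variable {T₁ T₂ : AddSubmonoid ℕ} {p q : ℕ}

lemma zmem_glue_mul_iff (hq : q ∈ T₂) (hp₀ : 0 < p) (hq₀ : 0 < q) (hpq : Nat.Coprime p q)
    (w : ℤ) : zmem (glue T₁ T₂ p q) (p * w) ↔ zmem T₂ w := by
  rw [← zero_add ((p : ℤ) * w), ← mul_zero (q : ℤ), zmem_glue_add_iff hq₀ hpq]
  constructor
  · rintro ⟨t, ha, hb⟩
    have ht : t ≤ 0 := by nlinarith [ha.nonneg]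
    convert hb.add_mul_of_nonneg hq (neg_nonneg.2 ht) using 1
    ring
  · intro hw
    exact ⟨0, by simpa using ⟨0, T₁.zero_mem, rfl⟩, by simpa using hw⟩

lemma zmem_glue_frob_add_mul_iff (hT₁ : {x : ℕ | x ∉ (T₁ : Set ℕ)}.Finite) (hp : p ∈ T₁)
    (hq : q ∈ T₂) (hp₀ : 0 < p) (hq₀ : 0 < q) (hpq : Nat.Coprime p q) (w : ℤ) :
    zmem (glue T₁ T₂ p q) (q * (Frob T₁ + p) + p * w) ↔ zmem T₂ w := by
  rw [zmem_glue_add_iff hq₀ hpq]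
  constructor
  · rintro ⟨t, ha, hb⟩
    rcases le_or_gt t 0 with ht | ht
    · convert hb.add_mul_of_nonneg hq (neg_nonneg.2 ht) using 1
      ring
    · refine absurd ?_ (not_zmem_frob hT₁)
      convert ha.add_mul_of_nonneg hp (by omega : (0 : ℤ) ≤ t - 1) using 1
      ring
  · intro hw
    exact ⟨0, by simpa using zmem_of_frob_lt hT₁ (by omega : Frob T₁ < Frob T₁ + p),
      by simpa using hw⟩

lemma frob_glue (hT₁ : {x : ℕ | x ∉ (T₁ : Set ℕ)}.Finite)
    (hT₂ : {x : ℕ | x ∉ (T₂ : Set ℕ)}.Finite) (hp : p ∈ T₁) (hq : q ∈ T₂) (hp₀ : 0 < p)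
    (hq₀ : 0 < q) (hpq : Nat.Coprime p q) :
    Frob (glue T₁ T₂ p q) = q * Frob T₁ + p * Frob T₂ + p * q := by
  refine IsGreatest.csSup_eq ⟨?_, fun z hnot => ?_⟩
  · rw [Set.mem_ofPred_eq, show (q : ℤ) * Frob T₁ + p * Frob T₂ + p * q
      = q * (Frob T₁ + p) + p * Frob T₂ by ring, zmem_glue_frob_add_mul_iff hT₁ hp hq hp₀ hq₀ hpq]
    exact not_zmem_frob hT₂
  by_contra! hlt
  obtain ⟨u, v, huv⟩ := Nat.isCoprime_iff_coprime.2 hpq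
  -- choose the representation `z = q a + p b` with `b ∈ (F₂, F₂ + q]`; then `a > F₁`
  obtain ⟨t, ⟨hb₁, hb₂⟩, -⟩ :=
    existsUnique_add_zsmul_mem_Ioc (by positivity : (0 : ℤ) < q) (u * z) (Frob T₂)
  rw [zsmul_eq_mul, Int.cast_id] at hb₁ hb₂
  have hz : z = q * (v * z - p * t) + p * (u * z + t * q) := by linear_combination (-z) * huv
  have ha : Frob T₁ < v * z - p * t := by
    have := mul_le_mul_of_nonneg_left hb₂ (by positivity : (0 : ℤ) ≤ p)
    refine lt_of_mul_lt_mul_left (a := (q : ℤ)) ?_ (by positivity)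
    linarith
  refine hnot ?_
  rw [hz, zmem_glue_add_iff hq₀ hpq]
  exact ⟨0, by simpa using zmem_of_frob_lt hT₁ ha, by simpa using zmem_of_frob_lt hT₂ hb₁⟩

end GlueFrobenius

section GlueSymmetric

variable {T₁ T₂ : AddSubmonoid ℕ} {p q : ℕ}
  (hT₁ : {x : ℕ | x ∉ (T₁ : Set ℕ)}.Finite) (hT₂ : {x : ℕ | x ∉ (T₂ : Set ℕ)}.Finite)
  (hp : p ∈ T₁) (hq : q ∈ T₂) (hp₀ : 0 < p) (hq₀ : 0 < q) (hpq : Nat.Coprime p q)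
include hT₁ hT₂ hp hq hp₀ hq₀ hpq

lemma IsSymmetric.right_of_glue (h : IsSymmetric (glue T₁ T₂ p q)) : IsSymmetric T₂ := by
  intro w
  have := h (q * (Frob T₁ + p) + p * w)
  rwa [frob_glue hT₁ hT₂ hp hq hp₀ hq₀ hpq, show (q : ℤ) * Frob T₁ + p * Frob T₂ + p * q
      - (q * (Frob T₁ + p) + p * w) = p * (Frob T₂ - w) by ring,
    zmem_glue_frob_add_mul_iff hT₁ hp hq hp₀ hq₀ hpq, zmem_glue_mul_iff hq hp₀ hq₀ hpq] at this

lemma IsSymmetric.left_of_glue (h : IsSymmetric (glue T₁ T₂ p q)) : IsSymmetric T₁ := by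
  rw [glue_comm] at h
  exact h.right_of_glue hT₂ hT₁ hq hp hq₀ hp₀ hpq.symm

lemma isSymmetric_glue (h₁ : IsSymmetric T₁) (h₂ : IsSymmetric T₂) :
    IsSymmetric (glue T₁ T₂ p q) := by
  intro z
  obtain ⟨u, v, huv⟩ := Nat.isCoprime_iff_coprime.2 hpq
  obtain ⟨a, b, rfl⟩ : ∃ a b : ℤ, z = q * a + p * b := ⟨v * z, u * z, by linear_combination (-z) * huv⟩
  have hP : Antitone fun t : ℤ => zmem T₁ (a - p * t) := fun s t hst ht => by
    convert ht.add_mul_of_nonneg hp (sub_nonneg.2 hst) using 1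
    ring
  have hQ : Monotone fun t : ℤ => zmem T₂ (b + q * t) := fun s t hst hs => by
    convert hs.add_mul_of_nonneg hq (sub_nonneg.2 hst) using 1
    ring
  have hQ_false : ∃ t : ℤ, ¬ zmem T₂ (b + q * t) := by
    refine ⟨-(|b| + 1), fun h => ?_⟩
    nlinarith [h.nonneg, le_abs_self b, abs_nonneg b]
  have hQ_true : ∃ t : ℤ, zmem T₂ (b + q * t) := by
    obtain ⟨t, ⟨ht, -⟩, -⟩ := existsUnique_add_zsmul_mem_Ioc (by positivity : (0 : ℤ) < q) b (Frob T₂)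
    exact ⟨t, zmem_of_frob_lt hT₂ (by simpa [mul_comm] using ht)⟩
  have hdual : zmem (glue T₁ T₂ p q) (Frob (glue T₁ T₂ p q) - (q * a + p * b)) ↔
      ∃ t : ℤ, ¬ zmem T₁ (a - p * (t + 1)) ∧ ¬ zmem T₂ (b + q * t) := by
    rw [frob_glue hT₁ hT₂ hp hq hp₀ hq₀ hpq, show (q : ℤ) * Frob T₁ + p * Frob T₂ + p * q
        - (q * a + p * b) = q * (Frob T₁ + p - a) + p * (Frob T₂ - b) by ring,
      zmem_glue_add_iff hq₀ hpq]
    simp only [h₁.not_zmem_iff, h₂.not_zmem_iff]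
    refine (Equiv.neg ℤ).exists_congr fun {t} => ?_
    congr! 2 <;> simp only [Equiv.neg_apply] <;> ring
  rw [zmem_glue_add_iff hq₀ hpq, hdual]
  exact Int.exists_and_iff_not_exists_not_and hP hQ hQ_false hQ_true

end GlueSymmetric

lemma one_mem_of_one_mem_closure {s : Set ℕ} (h : 1 ∈ AddSubmonoid.closure s) : 1 ∈ s := by
  refine AddSubmonoid.closure_induction (motive := fun x _ => x = 1 → 1 ∈ s)
    (fun x hx hx1 => hx1 ▸ hx) (by omega) (fun x y _ _ hx hy hxy => ?_) h rfl
  rcases (by omega : x = 1 ∨ y = 1) with hx1 | hy1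
  · exact hx hx1
  · exact hy hy1

namespace Gluing

variable (G : Gluing)

lemma S_eq_glue :
    G.S = glue (.closure (Set.range G.m)) (.closure (Set.range G.n)) G.p G.q := by
  rw [Gluing.S, AddSubmonoid.closure_union, glue, AddMonoidHom.map_mclosure,
    AddMonoidHom.map_mclosure]
  rfl

lemma p_pos : 0 < G.p := by
  refine Nat.pos_of_ne_zero fun hp => G.hqn ?_
  have hq : G.q = 1 := by simpa [hp] using G.hpq
  exact hq ▸ one_mem_of_one_mem_closure (hq ▸ G.hq)

lemma q_pos : 0 < G.q := by
  refine Nat.pos_of_ne_zero fun hq => G.hpm ?_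
  have hp : G.p = 1 := by simpa [hq] using G.hpq
  exact hp ▸ one_mem_of_one_mem_closure (hp ▸ G.hp)

end Gluing

/-- for a gluing `S` of `S₁` and `S₂`, the following are equivalent:
(1) `S` is symmetric and `S₁` (or `S₂`) is symmetric;
(2) both `S₁` and `S₂` are symmetric. -/
theorem stmt10 (G : Gluing) :
    (IsSymmetric G.S ∧ (IsSymmetric G.S₁ ∨ IsSymmetric G.S₂)) ↔
      (IsSymmetric G.S₁ ∧ IsSymmetric G.S₂) := by
  have hT₁ := G.hnum₁.2.2
  have hT₂ := G.hnum₂.2.2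
  rw [G.S_eq_glue]
  constructor
  · rintro ⟨h, -⟩
    exact ⟨h.left_of_glue hT₁ hT₂ G.hp G.hq G.p_pos G.q_pos G.hpq,
      h.right_of_glue hT₁ hT₂ G.hp G.hq G.p_pos G.q_pos G.hpq⟩
  · rintro ⟨h₁, h₂⟩
    exact ⟨isSymmetric_glue hT₁ hT₂ G.hp G.hq G.p_pos G.q_pos G.hpq h₁ h₂, .inl h₁⟩
end
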